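/- Let μ, δ > 0 with δ < μ, ζ ∈ (0,1), and define φ₊(ω) = (1−ζ)log ω − (1−ζ)ω + ζ log(ω/(ω+αμ)) for ω > 0 and α > 0. Then φ₊ attains its maximum on (0,∞) at ω₀⁺ = (1/2)(1 − αμ + √((αμ−1)² + 4αμ/(1−ζ))), and the quantity ζ−1 − φ₊(ω₀⁺) − αζ(μ−δ) has Taylor expansion δζα − (μ²ζ/(2(1−ζ)))α² + O(α³) around α = 0; in particular it is strictly positive for all sufficiently small α > 0. -/

import Mathlib

/-!
On `(0, ∞)` one has `φ₊(ω) = log ω - (1 - ζ) ω - ζ log (ω + a)` with `a = αμ`, whose derivative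
has the sign of `ω₀⁺ - ω`, because `ω₀⁺` is the positive root of
`(1 - ζ)(ω² + (a - 1)ω) = a`; so `ω₀⁺` is the maximiser.
Writing `ω₀⁺ = 1 + t`, the same equation gives `0 ≤ t ≤ ζa/(1 - ζ)`, and it turns
`ζ - 1 - φ₊(ω₀⁺) - ζa + ζa²/(2(1 - ζ))` exactly into cubic Taylor remainders of `log (1 + t)` and
`log (1 + t + a)` plus `(1 - ζ) t² (t + a)² / 2`, all `O(a³)`. Positivity for small `α` follows
since the leading term `δζα` is positive.
-/

open Filter Topology Asymptotics Set

theorem Real.log_one_add_sub_taylor_two_isBigO :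
    (fun x : ℝ => Real.log (1 + x) - (x - x ^ 2 / 2)) =O[𝓝 0] fun x => x ^ 3 := by
  refine isBigO_iff.2 ⟨2, ?_⟩
  filter_upwards [eventually_abs_sub_lt 0 (by norm_num : (0 : ℝ) < 1 / 2)] with x hx
  rw [sub_zero] at hx
  have hx' : |-x| < 1 := by rw [abs_neg]; linarith
  have h := Real.abs_log_sub_add_sum_range_le hx' 2
  simp only [Finset.sum_range_succ, Finset.sum_range_zero, abs_neg, sub_neg_eq_add] at h
  have hden : |x| ^ 3 / (1 - |x|) ≤ 2 * |x| ^ 3 := by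
    rw [div_le_iff₀ (by linarith)]
    nlinarith [pow_nonneg (abs_nonneg x) 3]
  have htaylor : Real.log (1 + x) - (x - x ^ 2 / 2) =
      0 + (-x) ^ (0 + 1) / ((0 : ℕ) + 1 : ℝ) + (-x) ^ (1 + 1) / ((1 : ℕ) + 1 : ℝ) +
        Real.log (1 + x) := by
    push_cast; ring
  rw [Real.norm_eq_abs, Real.norm_eq_abs, abs_pow, htaylor]
  exact h.trans hden

/-- `φ₊` of the paper, with `a = αμ`. -/
noncomputable def phiPlus (ζ a ω : ℝ) : ℝ :=
  (1 - ζ) * Real.log ω - (1 - ζ) * ω + ζ * Real.log (ω / (ω + a))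

noncomputable def phiPlusArgmax (ζ a : ℝ) : ℝ :=
  (1 / 2) * (1 - a + Real.sqrt ((a - 1) ^ 2 + 4 * a / (1 - ζ)))

section
variable {ζ a : ℝ}

theorem phiPlusArgmax_quadratic (hζ : ζ < 1) (ha : 0 ≤ a) :
    (1 - ζ) * (phiPlusArgmax ζ a ^ 2 + (a - 1) * phiPlusArgmax ζ a) = a := by
  have hκ : 0 < 1 - ζ := by linarith
  have hs := Real.sq_sqrt (by positivity : 0 ≤ (a - 1) ^ 2 + 4 * a / (1 - ζ))
  unfold phiPlusArgmax
  field_simp at hs ⊢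
  linear_combination hs

theorem one_le_phiPlusArgmax (hζ₀ : 0 ≤ ζ) (hζ : ζ < 1) (ha : 0 ≤ a) :
    1 ≤ phiPlusArgmax ζ a := by
  have hκ : 0 < 1 - ζ := by linarith
  have h4a : 4 * a ≤ 4 * a / (1 - ζ) := by
    rw [le_div_iff₀ hκ]; nlinarith
  have hs : 1 + a ≤ Real.sqrt ((a - 1) ^ 2 + 4 * a / (1 - ζ)) :=
    Real.le_sqrt_of_sq_le (by nlinarith)
  unfold phiPlusArgmax
  linarith

theorem hasDerivAt_phiPlus {x : ℝ} (ha : 0 ≤ a) (hx : 0 < x) :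
    HasDerivAt (phiPlus ζ a) (1 / x - (1 - ζ) - ζ / (x + a)) x := by
  have hxa : 0 < x + a := by linarith
  have hdiv := (hasDerivAt_id x).div ((hasDerivAt_id x).add_const a) hxa.ne'
  refine ((((Real.hasDerivAt_log hx.ne').const_mul (1 - ζ)).sub
    ((hasDerivAt_id x).const_mul (1 - ζ))).add
      ((hdiv.log (div_pos hx hxa).ne').const_mul ζ)).congr_deriv ?_
  simp only [id, Pi.div_apply]
  field_simp
  ring

theorem phiPlus_deriv_factor (hζ : ζ < 1) (ha : 0 ≤ a) {x : ℝ} (hx : 0 < x) :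
    1 / x - (1 - ζ) - ζ / (x + a) =
      (1 - ζ) * (phiPlusArgmax ζ a - x) * (x - (1 - a - phiPlusArgmax ζ a)) / (x * (x + a)) := by
  have hxa : 0 < x + a := by linarith
  rw [eq_div_iff (by positivity)]
  field_simp
  linear_combination -(phiPlusArgmax_quadratic hζ ha)

theorem isMaxOn_phiPlus (hζ₀ : 0 ≤ ζ) (hζ : ζ < 1) (ha : 0 ≤ a) :
    IsMaxOn (phiPlus ζ a) (Ioi 0) (phiPlusArgmax ζ a) := by
  set W := phiPlusArgmax ζ a
  have hW : 1 ≤ W := one_le_phiPlusArgmax hζ₀ hζ ha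
  have hderiv (x : ℝ) (hx : 0 < x) :
      deriv (phiPlus ζ a) x = (1 - ζ) * (W - x) * (x - (1 - a - W)) / (x * (x + a)) := by
    rw [(hasDerivAt_phiPlus ha hx).deriv, phiPlus_deriv_factor hζ ha hx]
  have hdiff : DifferentiableOn ℝ (phiPlus ζ a) (Ioi 0) := fun x hx =>
    (hasDerivAt_phiPlus ha hx).differentiableAt.differentiableWithinAt
  refine isMaxOn_Ioi_of_deriv (hasDerivAt_phiPlus ha (by linarith)).continuousAt
    (hdiff.mono Ioo_subset_Ioi_self) (hdiff.mono (Ioi_subset_Ioi (by linarith)))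
    (fun x hx => ?_) (fun x hx => ?_)
  · obtain ⟨hx0, hxW⟩ := hx
    rw [hderiv x hx0]
    exact div_nonneg (mul_nonneg (mul_nonneg (by linarith) (by linarith)) (by linarith))
      (by positivity)
  · have hx' : W < x := hx
    have hx0 : 0 < x := by linarith
    rw [hderiv x hx0]
    apply div_nonpos_of_nonpos_of_nonneg ?_ (by positivity)
    exact mul_nonpos_of_nonpos_of_nonneg
      (mul_nonpos_of_nonneg_of_nonpos (by linarith) (by linarith)) (by linarith)

theorem phiPlusArgmax_sub_one_mul (hζ : ζ < 1) (ha : 0 ≤ a) :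
    (1 - ζ) * (phiPlusArgmax ζ a - 1) * (phiPlusArgmax ζ a + a) = ζ * a := by
  linear_combination phiPlusArgmax_quadratic hζ ha

theorem phiPlusArgmax_sub_one_le (hζ₀ : 0 ≤ ζ) (hζ : ζ < 1) (ha : 0 ≤ a) :
    phiPlusArgmax ζ a - 1 ≤ ζ / (1 - ζ) * a := by
  have hW := one_le_phiPlusArgmax hζ₀ hζ ha
  have hprod : 0 ≤ (1 - ζ) * (phiPlusArgmax ζ a - 1) * (phiPlusArgmax ζ a + a - 1) :=
    mul_nonneg (mul_nonneg (by linarith) (by linarith)) (by linarith)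
  rw [div_mul_eq_mul_div, le_div_iff₀ (by linarith), ← phiPlusArgmax_sub_one_mul hζ ha]
  linarith

theorem phiPlus_one_add_eq {t : ℝ} (hζ : ζ < 1) (ht : 0 < 1 + t) (hta : 0 < 1 + (t + a))
    (hcrit : (1 - ζ) * t * (1 + (t + a)) = ζ * a) :
    ζ - 1 - phiPlus ζ a (1 + t) - ζ * a + ζ * a ^ 2 / (2 * (1 - ζ)) =
      -(Real.log (1 + t) - (t - t ^ 2 / 2))
        + ζ * (Real.log (1 + (t + a)) - (t + a - (t + a) ^ 2 / 2))
        + (1 - ζ) / 2 * (t ^ 2 * (t + a) ^ 2) := by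
  have hκ : 1 - ζ ≠ 0 := by linarith
  -- `hcrit` says `(1 - ζ) t - ζ a = -(1 - ζ) t (t + a)`, so the quadratic terms collapse
  -- to the square `(1 - ζ) t² (t + a)²`.
  unfold phiPlus
  rw [Real.log_div ht.ne' (by rw [← add_assoc] at hta; exact hta.ne'), ← add_assoc 1 t a]
  field_simp
  linear_combination ((1 - ζ) * t - ζ * a - (1 - ζ) * t * (t + a)) * hcrit

theorem phiPlus_phiPlusArgmax_eq (hζ₀ : 0 ≤ ζ) (hζ : ζ < 1) (ha : 0 ≤ a) :
    let t := phiPlusArgmax ζ a - 1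
    ζ - 1 - phiPlus ζ a (phiPlusArgmax ζ a) - ζ * a + ζ * a ^ 2 / (2 * (1 - ζ)) =
      -(Real.log (1 + t) - (t - t ^ 2 / 2))
        + ζ * (Real.log (1 + (t + a)) - (t + a - (t + a) ^ 2 / 2))
        + (1 - ζ) / 2 * (t ^ 2 * (t + a) ^ 2) := by
  intro t
  have hW := one_le_phiPlusArgmax hζ₀ hζ ha
  rw [← phiPlus_one_add_eq hζ (by linarith) (by linarith)
    (by linear_combination phiPlusArgmax_sub_one_mul hζ ha), add_sub_cancel]

theorem phiPlus_phiPlusArgmax_isBigO {ζ : ℝ} (hζ₀ : 0 ≤ ζ) (hζ : ζ < 1) :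
    (fun a => ζ - 1 - phiPlus ζ a (phiPlusArgmax ζ a) - ζ * a + ζ * a ^ 2 / (2 * (1 - ζ)))
      =O[𝓝[≥] 0] fun a => a ^ 3 := by
  set t : ℝ → ℝ := fun a => phiPlusArgmax ζ a - 1
  have hnonneg : ∀ᶠ a in 𝓝[≥] (0 : ℝ), 0 ≤ a := self_mem_nhdsWithin
  have ht : t =O[𝓝[≥] 0] fun a => a := by
    refine isBigO_iff.2 ⟨ζ / (1 - ζ), ?_⟩
    filter_upwards [hnonneg] with a ha
    have h0 : 0 ≤ t a := by linarith [one_le_phiPlusArgmax hζ₀ hζ ha]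
    rw [Real.norm_of_nonneg h0, Real.norm_of_nonneg ha]
    exact phiPlusArgmax_sub_one_le hζ₀ hζ ha
  have hu : (fun a => t a + a) =O[𝓝[≥] 0] fun a => a := ht.add (isBigO_refl _ _)
  have hid : Tendsto (fun a : ℝ => a) (𝓝[≥] 0) (𝓝 0) :=
    tendsto_nhdsWithin_of_tendsto_nhds tendsto_id
  have hlog := Real.log_one_add_sub_taylor_two_isBigO
  have hlog_t := (hlog.comp_tendsto (ht.trans_tendsto hid)).trans (ht.pow 3)
  have hlog_u := (hlog.comp_tendsto (hu.trans_tendsto hid)).trans (hu.pow 3)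
  have hquartic : (fun a : ℝ => a ^ 4) =O[𝓝[≥] 0] fun a => a ^ 3 :=
    ((isLittleO_pow_pow (by norm_num : 3 < 4)).isBigO).mono nhdsWithin_le_nhds
  have hprod : (fun a => (1 - ζ) / 2 * (t a ^ 2 * (t a + a) ^ 2)) =O[𝓝[≥] 0] fun a => a ^ 3 :=
    (((ht.pow 2).mul (hu.pow 2)).const_mul_left _).trans
      (hquartic.congr_left fun a => by ring)
  refine ((hlog_t.neg_left.add (hlog_u.const_mul_left ζ)).add hprod).congr' ?_ EventuallyEq.rfl
  filter_upwards [hnonneg] with a ha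
  exact (phiPlus_phiPlusArgmax_eq hζ₀ hζ ha).symm

end

theorem eventually_pos_of_sub_mul_isLittleO {f : ℝ → ℝ} {c : ℝ} (hc : 0 < c)
    (h : (fun x => f x - c * x) =o[𝓝[>] 0] fun x => x) : ∀ᶠ x in 𝓝[>] 0, 0 < f x := by
  filter_upwards [h.def (half_pos hc), self_mem_nhdsWithin] with x hx (hx0 : 0 < x)
  rw [Real.norm_eq_abs, Real.norm_of_nonneg hx0.le] at hx
  nlinarith [neg_abs_le (f x - c * x)]

theorem stmt_18_general (ζ μ δ : ℝ) (hζ : ζ ∈ Set.Ioo (0 : ℝ) 1) (hμ : 0 < μ)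
    (hδ : 0 < δ) :
    let φ : ℝ → ℝ → ℝ := fun α ω =>
      (1 - ζ) * Real.log ω - (1 - ζ) * ω + ζ * Real.log (ω / (ω + α * μ))
    let ω₀ : ℝ → ℝ := fun α =>
      (1 / 2) * (1 - α * μ + Real.sqrt ((α * μ - 1) ^ 2 + 4 * α * μ / (1 - ζ)))
    let g : ℝ → ℝ := fun α => ζ - 1 - φ α (ω₀ α) - α * ζ * (μ - δ)
    (∀ α : ℝ, 0 < α → IsMaxOn (φ α) (Set.Ioi 0) (ω₀ α)) ∧
    (fun α : ℝ => g α - (δ * ζ * α - μ ^ 2 * ζ / (2 * (1 - ζ)) * α ^ 2))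
      =O[𝓝[>] (0 : ℝ)] (fun α : ℝ => α ^ 3) ∧
    ∀ᶠ α : ℝ in 𝓝[>] (0 : ℝ), 0 < g α := by
  obtain ⟨hζ₀, hζ₁⟩ := hζ
  intro φ ω₀ g
  have hω₀ (α : ℝ) : ω₀ α = phiPlusArgmax ζ (α * μ) := by
    simp only [ω₀, phiPlusArgmax, mul_assoc]
  have hscale : Tendsto (fun α => α * μ) (𝓝[>] 0) (𝓝[≥] 0) :=
    tendsto_nhdsWithin_iff.2
      ⟨((continuous_mul_const μ).tendsto' 0 0 (zero_mul μ)).mono_left nhdsWithin_le_nhds,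
        eventually_nhdsWithin_of_forall fun α (hα : 0 < α) => (mul_pos hα hμ).le⟩
  have hexpansion : (fun α : ℝ => g α - (δ * ζ * α - μ ^ 2 * ζ / (2 * (1 - ζ)) * α ^ 2))
      =O[𝓝[>] (0 : ℝ)] (fun α : ℝ => α ^ 3) := by
    refine (((phiPlus_phiPlusArgmax_isBigO hζ₀.le hζ₁).comp_tendsto hscale).trans
      (((isBigO_refl (fun α : ℝ => α ^ 3) _).const_mul_left (μ ^ 3)).congr_left
        fun α => by simp only [Function.comp_apply]; ring)).congr_left fun α => ?_
    simp only [Function.comp, g, φ, hω₀, phiPlus]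
    ring
  refine ⟨fun α hα => hω₀ α ▸ isMaxOn_phiPlus hζ₀.le hζ₁ (mul_pos hα hμ).le, hexpansion, ?_⟩
  have hlin (n : ℕ) (hn : 1 < n) : (fun α : ℝ => α ^ n) =o[𝓝[>] 0] fun α => α :=
    ((isLittleO_pow_pow hn).mono nhdsWithin_le_nhds).congr_right fun α => pow_one α
  refine eventually_pos_of_sub_mul_isLittleO (mul_pos hδ hζ₀)
    (((hexpansion.trans_isLittleO (hlin 3 (by norm_num))).sub
      ((hlin 2 (by norm_num)).const_mul_left (μ ^ 2 * ζ / (2 * (1 - ζ))))).congr_left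
        fun α => by ring)

/-- for `ζ ∈ (0,1)`, `μ > 0`, `δ ∈ (0,μ)`, and
`φ₊(ω) = (1-ζ)log ω - (1-ζ)ω + ζ log(ω/(ω+αμ))`, the function `φ₊` attains its
maximum on `(0,∞)` at `ω₀⁺ = (1/2)(1 - αμ + √((αμ-1)² + 4αμ/(1-ζ)))`, and the
quantity `ζ - 1 - φ₊(ω₀⁺) - αζ(μ-δ)` equals `δζα - (μ²ζ/(2(1-ζ)))α² + O(α³)` as
`α → 0⁺`; in particular it is strictly positive for all sufficiently small
`α > 0`. -/
theorem stmt_18 (ζ μ δ : ℝ) (hζ : ζ ∈ Set.Ioo (0 : ℝ) 1) (hμ : 0 < μ)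
    (hδ : 0 < δ) (hδμ : δ < μ) :
    let φ : ℝ → ℝ → ℝ := fun α ω =>
      (1 - ζ) * Real.log ω - (1 - ζ) * ω + ζ * Real.log (ω / (ω + α * μ))
    let ω₀ : ℝ → ℝ := fun α =>
      (1 / 2) * (1 - α * μ + Real.sqrt ((α * μ - 1) ^ 2 + 4 * α * μ / (1 - ζ)))
    let g : ℝ → ℝ := fun α => ζ - 1 - φ α (ω₀ α) - α * ζ * (μ - δ)
    (∀ α : ℝ, 0 < α → IsMaxOn (φ α) (Set.Ioi 0) (ω₀ α)) ∧
    (fun α : ℝ => g α - (δ * ζ * α - μ ^ 2 * ζ / (2 * (1 - ζ)) * α ^ 2))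
      =O[𝓝[>] (0 : ℝ)] (fun α : ℝ => α ^ 3) ∧
    ∀ᶠ α : ℝ in 𝓝[>] (0 : ℝ), 0 < g α :=
  stmt_18_general ζ μ δ hζ hμ hδ
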